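/- In the k-deficient roundabout exploration model, let t ∈ [N] and let r be an integer with 2k + 1 ≤ r ≤ N. If at least r agents remain active after t steps, i.e., |A(t)| ≥ r, then t ≤ (2N − r)/(r − 2k). -/

import Mathlib

/-- The circular interval `⟨i, j⟩` on `Fin N`: all states encountered when moving
forward from `i` to `j` along the cycle `(0, 1, …, N-1, 0)`. -/
def cInt {N : ℕ} (i j : Fin N) : Set (Fin N) := {x | (x - i).val ≤ (j - i).val}

/-- The half-open circular interval `⟨i, j)` on `Fin N`, which excludes the right
endpoint `j`. -/
def cIntHalf {N : ℕ} (i j : Fin N) : Set (Fin N) := cInt i j \ {j}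

/-- The roundabout exploration model on the state set `Fin N`:
`avail t` is the set of positions available at step `t` (steps `t = 1, …, N` are
relevant), `state i t` is the state of agent `a_i` after step `t`, and `active t`
is the set of (indices of) active agents after step `t`. Agent `a_i` starts at
state `i`, moves forward one position (cyclically) at step `t` whenever its
current position is available, and stays put otherwise. Active agents satisfy:
initially all agents are active, the active sets are decreasing, elimination
preserves coverage of visited states, and every active agent is non-redundant. -/
structure Roundabout (N : ℕ) [NeZero N] where
  avail : ℕ → Set (Fin N)
  state : Fin N → ℕ → Fin N
  active : ℕ → Set (Fin N)
  state_zero : ∀ i, state i 0 = i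
  state_succ_of_mem : ∀ i t, state i t ∈ avail (t + 1) → state i (t + 1) = state i t + 1
  state_succ_of_not_mem : ∀ i t, state i t ∉ avail (t + 1) → state i (t + 1) = state i t
  active_zero : active 0 = Set.univ
  active_mono : ∀ t, active (t + 1) ⊆ active t
  active_cover : ∀ t, (⋃ j ∈ active (t + 1), cInt j (state j (t + 1)))
      = ⋃ j ∈ active t, cInt j (state j (t + 1))
  active_nonredundant : ∀ t, ∀ i ∈ active (t + 1),
      ¬ cInt i (state i (t + 1)) ⊆ ⋃ j ∈ active (t + 1) \ {i}, cInt j (state j (t + 1))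

/-- `D_i(t)`, the set of states visited by agent `a_i` up to step `t`. -/
def Roundabout.visited {N : ℕ} [NeZero N] (R : Roundabout N) (i : Fin N) (t : ℕ) :
    Set (Fin N) := cInt i (R.state i t)

/-- The roundabout model is `k`-deficient: at every step `t ∈ [N]`, at most `2k`
positions are unavailable. -/
def Roundabout.KDeficient {N : ℕ} [NeZero N] (R : Roundabout N) (k : ℕ) : Prop :=
  ∀ t : ℕ, 1 ≤ t → t ≤ N → ((R.avail t)ᶜ : Set (Fin N)).ncard ≤ 2 * k

/-!
All agents active after step `t` were active throughout, so by non-redundancy they occupy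
pairwise distinct states and none of them has completed a lap (its arc would be everything).
Hence for each such agent, displacement plus number of blocked steps equals `t`. At each step
the blocked active agents sit on distinct unavailable positions, so there are at most `2kt`
blocked steps in total. Non-redundancy also means no state lies in three active arcs: of three
arcs through `x`, one that neither reaches furthest back from `x` nor furthest forward is
covered by the other two. So the arcs have total size at most `2N`, which together gives
`|A(t)| (t + 1) ≤ 2N + 2kt`.
-/

open Finset

lemma Fin.val_sub_add_val_sub {N : ℕ} [NeZero N] (a b c : Fin N) :
    (a - b).val + (b - c).val = (a - c).val ∨ (a - b).val + (b - c).val = (a - c).val + N := by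
  have h := Fin.val_add_eq_ite (a - b) (b - c)
  rw [sub_add_sub_cancel] at h
  split_ifs at h <;> omega

section cInt

variable {N : ℕ} {i j x σ τ : Fin N}

@[simp]
lemma mem_cInt : x ∈ cInt i j ↔ (x - i).val ≤ (j - i).val := Iff.rfl

instance : Decidable (x ∈ cInt i j) := decidable_of_iff' _ mem_cInt

lemma cInt_subset_of_mem_right (h : x ∈ cInt i σ) : cInt i x ⊆ cInt i σ :=
  fun _ hy => mem_cInt.2 ((mem_cInt.1 hy).trans h)

lemma cInt_subset_cInt_right (h : (σ - x).val ≤ (τ - x).val) : cInt x σ ⊆ cInt x τ :=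
  fun _ hy => mem_cInt.2 ((mem_cInt.1 hy).trans h)

lemma cInt_eq_univ (h : N ≤ (j - i).val + 1) : cInt i j = Set.univ :=
  Set.eq_univ_of_forall fun x => by have := (x - i).isLt; rw [mem_cInt]; omega

variable [NeZero N]

lemma cInt_self (i : Fin N) : cInt i i = {i} := by
  ext x
  simp [Fin.ext_iff, sub_eq_zero]

lemma cInt_subset_of_mem_left (h : j ∈ cInt i σ) : cInt j σ ⊆ cInt i σ := by
  intro x hx
  rw [mem_cInt] at h hx ⊢
  have := (x - i).isLt
  have := (σ - j).isLt
  rcases Fin.val_sub_add_val_sub σ j i with h1 | h1 <;>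
    rcases Fin.val_sub_add_val_sub x j i with h2 | h2 <;> omega

lemma cInt_subset_union_of_mem (h : x ∈ cInt i σ) : cInt i σ ⊆ cInt i x ∪ cInt x σ := by
  intro y hy
  rw [mem_cInt] at h hy
  rw [Set.mem_union, mem_cInt, mem_cInt]
  have := (y - i).isLt
  have := (σ - i).isLt
  have := (x - i).isLt
  rcases Fin.val_sub_add_val_sub y x i with h1 | h1 <;>
    rcases Fin.val_sub_add_val_sub σ x i with h2 | h2 <;> omega

lemma cInt_subset_cInt_left (h : (x - i).val ≤ (x - j).val) : cInt i x ⊆ cInt j x := by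
  refine cInt_subset_of_mem_left ?_
  rw [mem_cInt]
  have := (x - j).isLt
  have := (i - j).isLt
  rcases Fin.val_sub_add_val_sub x i j with h1 | h1 <;> omega

lemma mem_cInt_or_mem_cInt (hij : i ≠ j) (σ : Fin N) : j ∈ cInt i σ ∨ i ∈ cInt j σ := by
  rw [mem_cInt, mem_cInt]
  have hji : (j - i).val ≠ 0 := by simpa [Fin.ext_iff, sub_eq_zero] using hij.symm
  have hij' : (i - j).val ≠ 0 := by simpa [Fin.ext_iff, sub_eq_zero] using hij
  have := (σ - i).isLt
  have := (σ - j).isLt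
  have hcycle := Fin.val_sub_add_val_sub i j i
  rw [sub_self, Fin.val_zero] at hcycle
  rcases Fin.val_sub_add_val_sub σ j i with h1 | h1 <;>
    rcases Fin.val_sub_add_val_sub σ i j with h2 | h2 <;> omega

lemma ncard_cInt (i j : Fin N) : (cInt i j).ncard = (j - i).val + 1 := by
  have himg : cInt i j = (fun c => i + c) '' Set.Iic (j - i) := by
    ext x
    refine ⟨fun hx => ⟨x - i, by rwa [Set.mem_Iic, Fin.le_def], by simp⟩, ?_⟩
    rintro ⟨c, hc, rfl⟩
    rw [Set.mem_Iic, Fin.le_def] at hc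
    simpa using hc
  rw [himg, Set.ncard_image_of_injective _ (add_right_injective i),
    ← coe_Iic, Set.ncard_coe_finset, Fin.card_Iic]

end cInt

section family

variable {N : ℕ} [NeZero N] {ι : Type*} [DecidableEq ι] (s : Finset ι) (a e : ι → Fin N)

lemma card_filter_mem_cInt_le_two
    (hs : ∀ i ∈ s, ¬ cInt (a i) (e i) ⊆ ⋃ j ∈ s.erase i, cInt (a j) (e j)) (x : Fin N) :
    #{i ∈ s | x ∈ cInt (a i) (e i)} ≤ 2 := by
  by_contra! hcard
  set T := {i ∈ s | x ∈ cInt (a i) (e i)}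
  have hT : T.Nonempty := card_pos.1 (by omega)
  obtain ⟨p, hpT, hp⟩ := T.exists_max_image (fun i => (x - a i).val) hT
  obtain ⟨q, hqT, hq⟩ := T.exists_max_image (fun i => (e i - x).val) hT
  obtain ⟨m, hm⟩ : ((T.erase p).erase q).Nonempty := by
    rw [← card_pos]
    have := pred_card_le_card_erase (s := T.erase p) (a := q)
    have := pred_card_le_card_erase (s := T) (a := p)
    omega
  obtain ⟨hmq, hm⟩ := mem_erase.1 hm
  obtain ⟨hmp, hmT⟩ := mem_erase.1 hm
  have hpm := hp m hmT
  have hqm := hq m hmT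
  simp only [T, mem_filter] at hpT hqT hmT
  refine hs m hmT.1 ?_
  calc cInt (a m) (e m) ⊆ cInt (a m) x ∪ cInt x (e m) := cInt_subset_union_of_mem hmT.2
    _ ⊆ cInt (a p) (e p) ∪ cInt (a q) (e q) :=
        Set.union_subset_union
          ((cInt_subset_cInt_left hpm).trans (cInt_subset_of_mem_right hpT.2))
          ((cInt_subset_cInt_right hqm).trans (cInt_subset_of_mem_left hqT.2))
    _ ⊆ ⋃ j ∈ s.erase m, cInt (a j) (e j) :=
        Set.union_subset
          (subset_set_biUnion_of_mem (f := fun j => cInt (a j) (e j))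
            (mem_erase.2 ⟨hmp.symm, hpT.1⟩))
          (subset_set_biUnion_of_mem (f := fun j => cInt (a j) (e j))
            (mem_erase.2 ⟨hmq.symm, hqT.1⟩))

lemma sum_ncard_cInt_le
    (hs : ∀ i ∈ s, ¬ cInt (a i) (e i) ⊆ ⋃ j ∈ s.erase i, cInt (a j) (e j)) :
    ∑ i ∈ s, (cInt (a i) (e i)).ncard ≤ 2 * N := by
  calc ∑ i ∈ s, (cInt (a i) (e i)).ncard
      = ∑ i ∈ s, #(univ.bipartiteAbove (fun i x => x ∈ cInt (a i) (e i)) i) := by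
        refine sum_congr rfl fun i _ => ?_
        rw [bipartiteAbove, ← Set.ncard_coe_finset, coe_filter]
        simp only [mem_univ, true_and, Set.ofPred_mem_eq]
    _ = ∑ x, #(s.bipartiteBelow (fun i x => x ∈ cInt (a i) (e i)) x) :=
        sum_card_bipartiteAbove_eq_sum_card_bipartiteBelow _
    _ ≤ ∑ _x : Fin N, 2 := sum_le_sum fun x _ => card_filter_mem_cInt_le_two s a e hs x
    _ = 2 * N := by simp [mul_comm]

end family

namespace Roundabout

variable {N : ℕ} [NeZero N] (R : Roundabout N) {i j : Fin N} {t : ℕ}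

lemma active_antitone : Antitone R.active := antitone_nat_of_succ_le R.active_mono

lemma not_visited_subset_biUnion (t : ℕ) (hi : i ∈ R.active t) :
    ¬ R.visited i t ⊆ ⋃ j ∈ R.active t \ {i}, R.visited j t := by
  cases t with
  | zero =>
    simp only [visited, R.state_zero, cInt_self, Set.singleton_subset_iff, Set.mem_iUnion,
      Set.mem_singleton_iff]
    rintro ⟨j, ⟨-, hji⟩, rfl⟩
    exact hji rfl
  | succ t => exact R.active_nonredundant t i hi

lemma visited_subset_biUnion (hi : i ∈ R.active t) (hij : i ≠ j) :
    R.visited i t ⊆ ⋃ l ∈ R.active t \ {j}, R.visited l t :=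
  Set.subset_biUnion_of_mem (u := fun l => R.visited l t) ⟨hi, hij⟩

lemma state_injOn (t : ℕ) : Set.InjOn (R.state · t) (R.active t) := by
  intro i hi j hj (hstate : R.state i t = R.state j t)
  by_contra hij
  wlog hji : j ∈ cInt i (R.state i t) generalizing i j
  · exact this hj hi hstate.symm (Ne.symm hij)
      (hstate ▸ (mem_cInt_or_mem_cInt hij (R.state i t)).resolve_left hji)
  refine R.not_visited_subset_biUnion t hj ?_
  calc R.visited j t = cInt j (R.state i t) := by rw [visited, ← hstate]
    _ ⊆ R.visited i t := cInt_subset_of_mem_left hji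
    _ ⊆ _ := R.visited_subset_biUnion hi hij

lemma val_sub_add_one_lt (hi : i ∈ R.active t) (hj : j ∈ R.active t) (hij : i ≠ j) :
    (R.state i t - i).val + 1 < N := by
  by_contra! hfull
  refine R.not_visited_subset_biUnion t hj ?_
  calc R.visited j t ⊆ Set.univ := Set.subset_univ _
    _ = R.visited i t := (cInt_eq_univ hfull).symm
    _ ⊆ _ := R.visited_subset_biUnion hi hij

open Classical in
noncomputable def blockedSteps (i : Fin N) (t : ℕ) : ℕ :=
  #{u ∈ range t | R.state i u ∉ R.avail (u + 1)}

lemma val_sub_add_blockedSteps (h : ∀ u < t, (R.state i u - i).val + 1 < N) :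
    (R.state i t - i).val + R.blockedSteps i t = t := by
  induction t with
  | zero => simp [blockedSteps, R.state_zero]
  | succ t ih =>
    have ih := ih fun u hu => h u (by omega)
    have hlap := h t (by omega)
    rw [blockedSteps, range_add_one, filter_insert] at *
    by_cases hmove : R.state i t ∈ R.avail (t + 1)
    · rw [R.state_succ_of_mem i t hmove, if_neg (not_not.2 hmove), add_sub_right_comm,
        Fin.val_add_one_of_lt' (by omega)]
      omega
    · rw [R.state_succ_of_not_mem i t hmove, if_pos hmove,
        card_insert_of_notMem (by simp)]
      omega

open Classical in
lemma card_filter_blocked_le {k : ℕ} (hdef : R.KDeficient k) (s : Finset (Fin N))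
    {u : ℕ} (hs : ↑s ⊆ R.active u) (hu : u < N) :
    #{i ∈ s | R.state i u ∉ R.avail (u + 1)} ≤ 2 * k := by
  rw [← Set.ncard_coe_finset]
  refine (Set.ncard_le_ncard_of_injOn (R.state · u) ?_ ?_ (Set.toFinite _)).trans
    (hdef (u + 1) (by omega) (by omega))
  · intro i hi
    exact (mem_filter.1 hi).2
  · exact (R.state_injOn u).mono ((coe_subset.2 (filter_subset _ _)).trans hs)

lemma sum_blockedSteps_le {k : ℕ} (hdef : R.KDeficient k) (s : Finset (Fin N))
    (hs : ↑s ⊆ R.active t) (ht : t ≤ N) :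
    ∑ i ∈ s, R.blockedSteps i t ≤ 2 * k * t := by
  classical
  calc ∑ i ∈ s, R.blockedSteps i t
      = ∑ u ∈ range t, #{i ∈ s | R.state i u ∉ R.avail (u + 1)} :=
        sum_card_bipartiteAbove_eq_sum_card_bipartiteBelow _
    _ ≤ ∑ _u ∈ range t, 2 * k := sum_le_sum fun u hu => by
        have hut : u < t := mem_range.1 hu
        exact R.card_filter_blocked_le hdef s (hs.trans (R.active_antitone hut.le)) (by omega)
    _ = 2 * k * t := by simp [mul_comm]

lemma sum_ncard_visited_le (s : Finset (Fin N)) (hs : ↑s ⊆ R.active t) :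
    ∑ i ∈ s, (R.visited i t).ncard ≤ 2 * N := by
  refine sum_ncard_cInt_le s id (R.state · t) fun i hi hcover => ?_
  refine R.not_visited_subset_biUnion t (hs hi) (hcover.trans ?_)
  exact Set.iUnion₂_subset fun j hj =>
    R.visited_subset_biUnion (hs (mem_of_mem_erase hj)) (ne_of_mem_erase hj)

lemma ncard_active_mul_succ_le {k : ℕ} (hdef : R.KDeficient k) (ht : t ≤ N) :
    (R.active t).ncard * (t + 1) ≤ 2 * N + 2 * k * t := by
  set s := (R.active t).toFinite.toFinset
  have hs : ↑s = R.active t := Set.Finite.coe_toFinset _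
  rw [← hs, Set.ncard_coe_finset]
  rcases le_or_gt #s 1 with hsmall | hlarge
  · have : 1 ≤ N := NeZero.one_le
    nlinarith
  have hprogress : ∀ i ∈ s, (R.state i t - i).val + R.blockedSteps i t = t := by
    intro i hi
    obtain ⟨j, hj, hji⟩ := exists_mem_ne hlarge i
    rw [← mem_coe, hs] at hi hj
    exact R.val_sub_add_blockedSteps fun u hu =>
      R.val_sub_add_one_lt (R.active_antitone hu.le hi) (R.active_antitone hu.le hj) hji.symm
  calc #s * (t + 1) = ∑ i ∈ s, (t + 1) := by rw [sum_const, smul_eq_mul]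
    _ = ∑ i ∈ s, ((R.visited i t).ncard + R.blockedSteps i t) :=
        sum_congr rfl fun i hi => by
          rw [visited, ncard_cInt]
          have := hprogress i hi
          omega
    _ = ∑ i ∈ s, (R.visited i t).ncard + ∑ i ∈ s, R.blockedSteps i t := sum_add_distrib
    _ ≤ 2 * N + 2 * k * t :=
        add_le_add (R.sum_ncard_visited_le s hs.subset) (R.sum_blockedSteps_le hdef s hs.subset ht)

end Roundabout

theorem roundabout_agents_time_bound_general {N : ℕ} [NeZero N] (k : ℕ) (R : Roundabout N)
    (hdef : R.KDeficient k)
    (t : ℕ) (ht : t ≤ N)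
    (r : ℕ) (hr1 : 2 * k + 1 ≤ r)
    (hA : r ≤ (R.active t).ncard) :
    (t : ℝ) ≤ (2 * (N : ℝ) - (r : ℝ)) / ((r : ℝ) - 2 * (k : ℝ)) := by
  have hkey : r * (t + 1) ≤ 2 * N + 2 * k * t :=
    (Nat.mul_le_mul_right _ hA).trans (R.ncard_active_mul_succ_le hdef ht)
  have hkeyR : (r : ℝ) * (t + 1) ≤ 2 * N + 2 * k * t := by exact_mod_cast hkey
  have hr : (2 * k + 1 : ℝ) ≤ r := by exact_mod_cast hr1
  rw [le_div_iff₀ (by linarith)]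
  linarith

/-- **Lemma (agents after `t` steps).** In the `k`-deficient roundabout model, if at
least `r` agents (with `2k + 1 ≤ r ≤ N`) remain active after step `t ∈ [N]`, then
`t ≤ (2N - r)/(r - 2k)`. -/
theorem roundabout_agents_time_bound {N : ℕ} [NeZero N] (k : ℕ) (R : Roundabout N)
    (hdef : R.KDeficient k)
    (t : ℕ) (ht1 : 1 ≤ t) (ht : t ≤ N)
    (r : ℕ) (hr1 : 2 * k + 1 ≤ r) (hr2 : r ≤ N)
    (hA : r ≤ (R.active t).ncard) :
    (t : ℝ) ≤ (2 * (N : ℝ) - (r : ℝ)) / ((r : ℝ) - 2 * (k : ℝ)) :=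
  roundabout_agents_time_bound_general k R hdef t ht r hr1 hA
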